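/- arXiv:2106.14472 — 3 statements merged into one kernel-verified Lean document; each statement's English description precedes it below -/
import Mathlib

section
/- For d ≥ 2 and φ ≤ d − 2, the integral over the open unit ball B_d of (1 − ‖z‖²)^{φ+1−d} / ‖e₁ − z‖² dz is infinite. -/
/-!
Since `‖e₁ - z‖² ≤ 4` and `φ + 1 - d ≤ -1`, the integrand dominates the radial function
`(1 - ‖z‖²)⁻¹ / 4`. In polar coordinates its integral over the ball is, up to a constant,
`∫₀¹ r^(d-1) / (1 - r²) dr`, which diverges logarithmically at `r = 1`.
-/

open MeasureTheory Metric Set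

theorem lintegral_ofReal_comp_norm_ball_eq_top {E : Type*} [NormedAddCommGroup E]
    [NormedSpace ℝ E] [FiniteDimensional ℝ E] [MeasurableSpace E] [BorelSpace E] [Nontrivial E]
    (μ : Measure E) [μ.IsAddHaarMeasure] {g : ℝ → ℝ} {r : ℝ} (hg : Measurable g)
    (hg_nonneg : ∀ y ∈ Ico 0 r, 0 ≤ g y)
    (hg_int : ¬ IntegrableOn (fun y ↦ y ^ (Module.finrank ℝ E - 1) • g y) (Ioo 0 r)) :
    ∫⁻ x in ball 0 r, ENNReal.ofReal (g ‖x‖) ∂μ = ⊤ := by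
  rw [← integrableOn_fun_norm_addHaar μ] at hg_int
  by_contra h
  refine hg_int ((lintegral_ofReal_ne_top_iff_integrable ?_ ?_).mp h)
  · exact (hg.comp measurable_norm).aestronglyMeasurable
  · refine (ae_restrict_iff' measurableSet_ball).mpr (.of_forall fun x hx ↦ ?_)
    exact hg_nonneg _ ⟨norm_nonneg x, mem_ball_zero_iff.mp hx⟩

theorem not_integrableOn_pow_mul_inv_one_sub_sq (n : ℕ) :
    ¬ IntegrableOn (fun y : ℝ ↦ y ^ n * (1 - y ^ 2)⁻¹) (Ioo 0 1) := by
  intro h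
  have hbound : ∀ y ∈ Ioo (1 / 2 : ℝ) 1,
      ‖(y - 1)⁻¹‖ ≤ 2 ^ (n + 1) * (y ^ n * (1 - y ^ 2)⁻¹) := by
    intro y ⟨hy₁, hy₂⟩
    have h1y : 0 < 1 - y := by linarith
    have h2y : 1 ≤ (2 * y) ^ n := one_le_pow₀ (by linarith)
    calc ‖(y - 1)⁻¹‖ = 1 * (1 - y)⁻¹ := by
          rw [norm_inv, Real.norm_eq_abs, abs_sub_comm, abs_of_pos h1y, one_mul]
      _ ≤ (2 * (2 * y) ^ n / (1 + y)) * (1 - y)⁻¹ := by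
          gcongr
          rw [one_le_div (by linarith)]
          linarith
      _ = 2 ^ (n + 1) * (y ^ n * (1 - y ^ 2)⁻¹) := by
          rw [show 1 - y ^ 2 = (1 - y) * (1 + y) by ring, mul_pow]
          field_simp
          ring
  have hsub_inv : IntervalIntegrable (fun y : ℝ ↦ (y - 1)⁻¹) volume (1 / 2) 1 := by
    rw [intervalIntegrable_iff_integrableOn_Ioo_of_le (by norm_num)]
    exact ((h.mono_set (Ioo_subset_Ioo_left (by norm_num))).const_mul (2 ^ (n + 1))).mono'
      (by fun_prop) ((ae_restrict_iff' measurableSet_Ioo).mpr (.of_forall hbound))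
  simp at hsub_inv

theorem inv_one_sub_norm_sq_div_four_le {E : Type*} [SeminormedAddCommGroup E] {e z : E} {a : ℝ}
    (he : ‖e‖ = 1) (hz : ‖z‖ < 1) (ha : a ≤ -1) :
    (1 - ‖z‖ ^ 2)⁻¹ / 4 ≤ (1 - ‖z‖ ^ 2) ^ a / ‖e - z‖ ^ 2 := by
  have hx : 0 < 1 - ‖z‖ ^ 2 := by nlinarith [norm_nonneg z]
  have hdist_pos : 0 < ‖e - z‖ := by
    linarith [norm_sub_norm_le e z]
  have hdist_le : ‖e - z‖ ≤ 2 := (norm_sub_le _ _).trans (by linarith)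
  have hpow : (1 - ‖z‖ ^ 2)⁻¹ ≤ (1 - ‖z‖ ^ 2) ^ a := by
    rw [← Real.rpow_neg_one]
    exact Real.rpow_le_rpow_of_exponent_ge hx (by nlinarith [norm_nonneg z]) ha
  apply div_le_div₀ (by positivity) hpow (by positivity)
  nlinarith

theorem integral_infinite_of_phi_le {d : ℕ} (hd : 2 ≤ d) (φ : ℝ) (hφ : φ ≤ (d : ℝ) - 2) :
    ∫⁻ z in Metric.ball (0 : EuclideanSpace ℝ (Fin d)) 1,
        ENNReal.ofReal ((1 - ‖z‖ ^ 2) ^ (φ + 1 - d) /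
          ‖EuclideanSpace.single (⟨0, by omega⟩ : Fin d) (1 : ℝ) - z‖ ^ 2) = ⊤ := by
  set e₁ : EuclideanSpace ℝ (Fin d) := EuclideanSpace.single ⟨0, by omega⟩ 1
  have he₁ : ‖e₁‖ = 1 := by simp [e₁]
  have : Nontrivial (EuclideanSpace ℝ (Fin d)) :=
    nontrivial_of_ne e₁ 0 (by simp [← norm_ne_zero_iff, he₁])
  have hradial : ¬ IntegrableOn (fun y : ℝ ↦
      y ^ (Module.finrank ℝ (EuclideanSpace ℝ (Fin d)) - 1) • ((1 - y ^ 2)⁻¹ / 4)) (Ioo 0 1) :=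
    fun h ↦ not_integrableOn_pow_mul_inv_one_sub_sq (d - 1) <|
      IntegrableOn.congr_fun (h.const_mul 4)
        (fun y _ ↦ by simp only [finrank_euclideanSpace_fin, smul_eq_mul]; ring) measurableSet_Ioo
  have hradial_nonneg : ∀ y ∈ Ico (0 : ℝ) 1, 0 ≤ (1 - y ^ 2)⁻¹ / 4 := fun y ⟨hy₀, hy₁⟩ ↦ by
    have : 0 ≤ 1 - y ^ 2 := by nlinarith
    positivity
  refine top_unique ((lintegral_ofReal_comp_norm_ball_eq_top volume (by fun_prop)
    hradial_nonneg hradial).ge.trans (setLIntegral_mono' measurableSet_ball fun z hz ↦ ?_))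
  exact ENNReal.ofReal_le_ofReal <|
    inv_one_sub_norm_sq_div_four_le he₁ (mem_ball_zero_iff.mp hz) (by linarith)
end

section
/- In dimension one, with the change of coordinates z' = (z+1)/2 ∈ (0,1) and prototypes p' ∈ {0,1}, the penalized Busemann loss with φ = 1 satisfies (1/2)·ℓ(z', p') + log 2 = −p'·log(z') − (1 − p')·log(1 − z'); i.e., it equals the binary cross-entropy loss up to an affine transformation. -/
open Real

/-- For a label `p ∈ {0, 1}`, the factor `|p - z|` cancels one of `z`, `1 - z`, leaving the
likelihood `z ^ p * (1 - z) ^ (1 - p)` in the denominator. -/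
theorem log_abs_sub_div_mul_one_sub {z p : ℝ} (hz : z ∈ Set.Ioo (0 : ℝ) 1) (hp : p = 0 ∨ p = 1) :
    log (|p - z| / (z * (1 - z))) = -p * log z - (1 - p) * log (1 - z) := by
  obtain ⟨hz0, hz1⟩ := hz
  have h1z : 0 < 1 - z := sub_pos.mpr hz1
  rcases hp with rfl | rfl
  · have hdiv : |0 - z| / (z * (1 - z)) = (1 - z)⁻¹ := by
      rw [zero_sub, abs_neg, abs_of_pos hz0]
      field_simp
    rw [hdiv, log_inv]
    ring
  · have hdiv : |1 - z| / (z * (1 - z)) = z⁻¹ := by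
      rw [abs_of_pos h1z]
      field_simp
    rw [hdiv, log_inv]
    ring

theorem busemann_is_cross_entropy (z' p' : ℝ) (hz : z' ∈ Set.Ioo (0:ℝ) 1)
    (hp : p' = 0 ∨ p' = 1) :
    (1 / 2) * (2 * Real.log (|p' - z'| / (2 * z' * (1 - z')))) + Real.log 2 =
      -p' * Real.log z' - (1 - p') * Real.log (1 - z') := by
  have hpos : 0 < |p' - z'| / (2 * z' * (1 - z')) := by
    obtain ⟨hz0, hz1⟩ := hz
    have hpz : p' - z' ≠ 0 := by rcases hp with rfl | rfl <;> linarith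
    have h1z : 0 < 1 - z' := sub_pos.mpr hz1
    positivity
  calc (1 / 2) * (2 * log (|p' - z'| / (2 * z' * (1 - z')))) + log 2
      = log (2 * (|p' - z'| / (2 * z' * (1 - z')))) := by
        rw [log_mul two_ne_zero hpos.ne']
        ring
    _ = log (|p' - z'| / (z' * (1 - z'))) := by
        rw [mul_assoc 2 z', ← div_div, ← mul_div_assoc, mul_div_cancel₀ _ two_ne_zero]
    _ = -p' * log z' - (1 - p') * log (1 - z') := log_abs_sub_div_mul_one_sub hz hp
end

section
/- Consequently, for z ≠ 0 in the open unit ball and a finite set P of unit-norm prototypes, argmin_{p ∈ P} b_p(z) = argmax_{p ∈ P} ⟨z/‖z‖, p⟩, where b_p(z) = log(‖p − z‖²/(1 − ‖z‖²)): minimizing the Busemann function over prototypes is equivalent to maximizing cosine similarity. -/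
/-! On the unit sphere `‖p - z‖² = 1 + ‖z‖² - 2⟪z, p⟫`, so for a fixed point `z` of the open ball
the Busemann function `b_p(z)` is a strictly increasing function of `-⟪z, p⟫`, and rescaling `z`
to `z / ‖z‖` does not change the order of the inner products. -/

open Real RealInnerProductSpace

variable {E : Type*} [NormedAddCommGroup E] [InnerProductSpace ℝ E]

/-- The Busemann function of the Poincaré ball for the ideal point `p`, evaluated at `z`. -/
noncomputable def busemann (p z : E) : ℝ :=
  log (‖p - z‖ ^ 2 / (1 - ‖z‖ ^ 2))

theorem norm_sub_sq_le_norm_sub_sq_iff {p q z : E} (h : ‖p‖ = ‖q‖) :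
    ‖p - z‖ ^ 2 ≤ ‖q - z‖ ^ 2 ↔ ⟪z, q⟫ ≤ ⟪z, p⟫ := by
  rw [norm_sub_sq_real, norm_sub_sq_real, h, real_inner_comm p, real_inner_comm q]
  constructor <;> intro <;> linarith

theorem busemann_le_busemann_iff {p q z : E} (hz : ‖z‖ < 1) (hp : ‖p‖ = 1) (hq : ‖q‖ = 1) :
    busemann p z ≤ busemann q z ↔ ⟪z, q⟫ ≤ ⟪z, p⟫ := by
  have hden : 0 < 1 - ‖z‖ ^ 2 := by nlinarith [norm_nonneg z]
  have hdist : ∀ {w : E}, ‖w‖ = 1 → 0 < ‖w - z‖ ^ 2 := fun hw =>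
    pow_pos ((sub_pos.2 (hw ▸ hz)).trans_le (norm_sub_norm_le _ z)) 2
  rw [busemann, busemann, log_le_log_iff (div_pos (hdist hp) hden) (div_pos (hdist hq) hden),
    div_le_div_iff_of_pos_right hden, norm_sub_sq_le_norm_sub_sq_iff (hp.trans hq.symm)]

theorem inner_inv_norm_smul_le_iff {z : E} (hz : z ≠ 0) (p q : E) :
    ⟪‖z‖⁻¹ • z, q⟫ ≤ ⟪‖z‖⁻¹ • z, p⟫ ↔ ⟪z, q⟫ ≤ ⟪z, p⟫ := by
  rw [real_inner_smul_left, real_inner_smul_left,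
    mul_le_mul_iff_of_pos_left (inv_pos.2 (norm_pos_iff.2 hz))]

theorem argmin_busemann_eq_argmax_cosine_general {d : ℕ}
    (z : EuclideanSpace ℝ (Fin d)) (hz0 : z ≠ 0) (hz : ‖z‖ < 1)
    (P : Finset (EuclideanSpace ℝ (Fin d)))
    (hunit : ∀ p ∈ P, ‖p‖ = 1) (p : EuclideanSpace ℝ (Fin d)) (hp : p ∈ P) :
    (∀ q ∈ P, Real.log (‖p - z‖ ^ 2 / (1 - ‖z‖ ^ 2)) ≤
        Real.log (‖q - z‖ ^ 2 / (1 - ‖z‖ ^ 2))) ↔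
    (∀ q ∈ P, (inner ℝ ((‖z‖)⁻¹ • z) q : ℝ) ≤ inner ℝ ((‖z‖)⁻¹ • z) p) :=
  forall₂_congr fun q hq =>
    (busemann_le_busemann_iff hz (hunit p hp) (hunit q hq)).trans
      (inner_inv_norm_smul_le_iff hz0 p q).symm

theorem argmin_busemann_eq_argmax_cosine {d : ℕ}
    (z : EuclideanSpace ℝ (Fin d)) (hz0 : z ≠ 0) (hz : ‖z‖ < 1)
    (P : Finset (EuclideanSpace ℝ (Fin d))) (hP : P.Nonempty)
    (hunit : ∀ p ∈ P, ‖p‖ = 1) (p : EuclideanSpace ℝ (Fin d)) (hp : p ∈ P) :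
    (∀ q ∈ P, Real.log (‖p - z‖ ^ 2 / (1 - ‖z‖ ^ 2)) ≤
        Real.log (‖q - z‖ ^ 2 / (1 - ‖z‖ ^ 2))) ↔
    (∀ q ∈ P, (inner ℝ ((‖z‖)⁻¹ • z) q : ℝ) ≤ inner ℝ ((‖z‖)⁻¹ • z) p) :=
  argmin_busemann_eq_argmax_cosine_general z hz0 hz P hunit p hp
end
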